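/- Let M be log-convex with lim (M_p)^{1/p} = ∞. Then M_p = M_0 · sup_{t>0} t^p / exp(ω_M(t)) for all p ∈ ℕ; i.e. a log-convex sequence is recovered from its associated function. -/
import Mathlib


open Filter

noncomputable def omegaR (M : ℕ → ℝ) (t : ℝ) : ℝ :=
  ⨆ p : ℕ, Real.log (M 0 * t ^ p / M p)

/-- boundedness of the family defining `omegaR` for `t > 0`. -/
lemma omegaR_bdd (M : ℕ → ℝ) (hM : ∀ p, 0 < M p)
    (hinf : Tendsto (fun p : ℕ => (M p) ^ (1 / (p : ℝ))) atTop atTop)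
    {t : ℝ} (ht : 0 < t) :
    BddAbove (Set.range fun q : ℕ => Real.log (M 0 * t ^ q / M q)) := by
  -- first bound the positive family a q = M 0 * t^q / M q
  obtain ⟨N, hN⟩ := eventually_atTop.mp (hinf.eventually_ge_atTop t)
  have ha_pos : ∀ q : ℕ, 0 < M 0 * t ^ q / M q := fun q =>
    div_pos (mul_pos (hM 0) (pow_pos ht q)) (hM q)
  have hbdd : BddAbove (Set.range fun q : ℕ => M 0 * t ^ q / M q) := by
    have hsub : (Set.range fun q : ℕ => M 0 * t ^ q / M q) ⊆
        ((fun q : ℕ => M 0 * t ^ q / M q) '' Set.Iio (N + 1)) ∪ Set.Iic (M 0) := by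
      rintro x ⟨q, rfl⟩
      by_cases hq : q < N + 1
      · exact Or.inl ⟨q, hq, rfl⟩
      · push_neg at hq
        right
        have hq1 : 1 ≤ q := le_trans (Nat.le_add_left 1 N) hq
        have hqN : N ≤ q := le_trans (Nat.le_succ N) hq
        have h1 : t ≤ (M q) ^ (1 / (q : ℝ)) := hN q hqN
        have hq0 : (q : ℝ) ≠ 0 := Nat.cast_ne_zero.mpr (by omega)
        have h2 : t ^ (q : ℝ) ≤ ((M q) ^ (1 / (q : ℝ))) ^ (q : ℝ) :=
          Real.rpow_le_rpow ht.le h1 (Nat.cast_nonneg q)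
        have h3 : ((M q) ^ (1 / (q : ℝ))) ^ (q : ℝ) = M q := by
          rw [← Real.rpow_mul (hM q).le, one_div, inv_mul_cancel₀ hq0, Real.rpow_one]
        have h4 : t ^ q ≤ M q := by
          have h5 := h2.trans_eq h3
          rw [← Real.rpow_natCast t q]
          exact h5
        rw [Set.mem_Iic]
        rw [div_le_iff₀ (hM q)]
        calc M 0 * t ^ q ≤ M 0 * M q := by
              exact mul_le_mul_of_nonneg_left h4 (hM 0).le
          _ = M 0 * M q := rfl
        -- goal: M 0 * t^q ≤ M 0 * M q, done via calc
    exact BddAbove.mono hsub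
      (((Set.finite_Iio (N + 1)).image _).bddAbove.union bddAbove_Iic)
  obtain ⟨B, hB⟩ := hbdd
  refine ⟨Real.log B, ?_⟩
  rintro x ⟨q, rfl⟩
  exact Real.log_le_log (ha_pos q) (hB ⟨q, rfl⟩)

theorem logconvex_recovered_from_associated_function
    (M : ℕ → ℝ) (hM : ∀ p, 0 < M p)
    (hlc : ∀ p : ℕ, 1 ≤ p → (M p) ^ 2 ≤ M (p - 1) * M (p + 1))
    (hinf : Tendsto (fun p : ℕ => (M p) ^ (1 / (p : ℝ))) atTop atTop) :
    ∀ p : ℕ,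
      M p = M 0 * ⨆ t : {t : ℝ // 0 < t}, ((t : ℝ) ^ p / Real.exp (omegaR M t)) := by
  intro p
  set r : ℕ → ℝ := fun q => M (q + 1) / M q with hr
  have hr_pos : ∀ q, 0 < r q := fun q => div_pos (hM (q + 1)) (hM q)
  have hr_mono : Monotone r := by
    apply monotone_nat_of_le_succ
    intro q
    have h := hlc (q + 1) (by omega)
    simp only [Nat.add_sub_cancel] at h
    rw [hr]
    rw [div_le_div_iff₀ (hM q) (hM (q + 1))]
    nlinarith [hM q, hM (q + 1), hM (q + 2)]
  -- key inequality: (r p)^q * M p ≤ (r p)^p * M q for all q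
  have key_up : ∀ k, (r p) ^ (p + k) * M p ≤ (r p) ^ p * M (p + k) := by
    intro k
    induction k with
    | zero => simp
    | succ k ih =>
      have h1 : r p ≤ r (p + k) := hr_mono (Nat.le_add_right p k)
      have h2 : (r p) ^ (p + (k + 1)) * M p = r p * ((r p) ^ (p + k) * M p) := by ring
      have h3 : r p * ((r p) ^ (p + k) * M p) ≤ r p * ((r p) ^ p * M (p + k)) :=
        mul_le_mul_of_nonneg_left ih (hr_pos p).le
      have h4 : r p * ((r p) ^ p * M (p + k)) ≤ r (p + k) * ((r p) ^ p * M (p + k)) :=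
        mul_le_mul_of_nonneg_right h1
          (mul_nonneg (pow_nonneg (hr_pos p).le p) (hM (p + k)).le)
      have h5 : r (p + k) * ((r p) ^ p * M (p + k)) = (r p) ^ p * M (p + k + 1) := by
        have hc : r (p + k) * M (p + k) = M (p + k + 1) := by
          rw [hr]
          exact div_mul_cancel₀ _ (hM (p + k)).ne'
        calc r (p + k) * ((r p) ^ p * M (p + k))
            = (r p) ^ p * (r (p + k) * M (p + k)) := by ring
          _ = (r p) ^ p * M (p + k + 1) := by rw [hc]
      calc (r p) ^ (p + (k + 1)) * M p = r p * ((r p) ^ (p + k) * M p) := h2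
        _ ≤ r p * ((r p) ^ p * M (p + k)) := h3
        _ ≤ r (p + k) * ((r p) ^ p * M (p + k)) := h4
        _ = (r p) ^ p * M (p + k + 1) := h5
  have key_down : ∀ k, k ≤ p → (r p) ^ (p - k) * M p ≤ (r p) ^ p * M (p - k) := by
    intro k
    induction k with
    | zero => simp
    | succ k ih =>
      intro hk
      have hk' : k ≤ p := by omega
      have ihk := ih hk'
      set q := p - (k + 1) with hq
      have hq1 : q + 1 = p - k := by omega
      have hqp : q ≤ p := by omega
      have h1 : r q ≤ r p := hr_mono hqp
      -- M (q+1) ≤ r p * M q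
      have h2 : M (q + 1) ≤ r p * M q := by
        have := (div_le_iff₀ (hM q)).mp h1
        linarith [this]
      have h3 : (r p) ^ (q + 1) * M p ≤ (r p) ^ p * M (q + 1) := by
        rw [hq1]; rw [hq1] at *; exact ihk
      have h4 : (r p) ^ p * M (q + 1) ≤ (r p) ^ p * (r p * M q) :=
        mul_le_mul_of_nonneg_left h2 (pow_nonneg (hr_pos p).le p)
      have h5 : r p * ((r p) ^ q * M p) ≤ r p * ((r p) ^ p * M q) := by
        calc r p * ((r p) ^ q * M p) = (r p) ^ (q + 1) * M p := by ring
          _ ≤ (r p) ^ p * M (q + 1) := h3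
          _ ≤ (r p) ^ p * (r p * M q) := h4
          _ = r p * ((r p) ^ p * M q) := by ring
      exact le_of_mul_le_mul_left h5 (hr_pos p)
  have key : ∀ q, (r p) ^ q * M p ≤ (r p) ^ p * M q := by
    intro q
    rcases le_or_gt q p with h | h
    · have := key_down (p - q) (Nat.sub_le p q)
      rwa [Nat.sub_sub_self h] at this
    · have := key_up (q - p)
      rwa [Nat.add_sub_cancel' h.le] at this
  -- value of omegaR at r p
  have hterm : ∀ q, M 0 * (r p) ^ q / M q ≤ M 0 * (r p) ^ p / M p := by
    intro q
    rw [div_le_div_iff₀ (hM q) (hM p)]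
    have := key q
    nlinarith [hM 0, this]
  have ha_pos : ∀ (t : ℝ), 0 < t → ∀ q, 0 < M 0 * t ^ q / M q := fun t ht q =>
    div_pos (mul_pos (hM 0) (pow_pos ht q)) (hM q)
  have homega_rp : omegaR M (r p) = Real.log (M 0 * (r p) ^ p / M p) := by
    apply le_antisymm
    · apply ciSup_le
      intro q
      exact Real.log_le_log (ha_pos _ (hr_pos p) q) (hterm q)
    · exact le_ciSup (omegaR_bdd M hM hinf (hr_pos p)) p
  have hexp_rp : Real.exp (omegaR M (r p)) = M 0 * (r p) ^ p / M p := by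
    rw [homega_rp, Real.exp_log (ha_pos _ (hr_pos p) p)]
  have hval : (r p) ^ p / Real.exp (omegaR M (r p)) = M p / M 0 := by
    have hx : (r p) ^ p ≠ 0 := (pow_pos (hr_pos p) p).ne'
    have h0 : M 0 ≠ 0 := (hM 0).ne'
    have hp0 : M p ≠ 0 := (hM p).ne'
    rw [hexp_rp]
    field_simp
  -- upper bound for all t > 0
  have hupper : ∀ (t : ℝ), 0 < t → t ^ p / Real.exp (omegaR M t) ≤ M p / M 0 := by
    intro t ht
    have h1 : Real.log (M 0 * t ^ p / M p) ≤ omegaR M t :=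
      le_ciSup (omegaR_bdd M hM hinf ht) p
    have h2 : M 0 * t ^ p / M p ≤ Real.exp (omegaR M t) := by
      calc M 0 * t ^ p / M p = Real.exp (Real.log (M 0 * t ^ p / M p)) :=
            (Real.exp_log (ha_pos t ht p)).symm
        _ ≤ Real.exp (omegaR M t) := Real.exp_le_exp.mpr h1
    rw [div_le_div_iff₀ (Real.exp_pos _) (hM 0)]
    have h3 : M 0 * t ^ p ≤ M p * Real.exp (omegaR M t) := by
      have := (div_le_iff₀ (hM p)).mp h2
      linarith
    linarith
  -- conclude
  have hbddO : BddAbove (Set.range fun t : {t : ℝ // 0 < t} =>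
      (t : ℝ) ^ p / Real.exp (omegaR M t)) := by
    refine ⟨M p / M 0, ?_⟩
    rintro x ⟨⟨t, ht⟩, rfl⟩
    exact hupper t ht
  have hsup : (⨆ t : {t : ℝ // 0 < t}, ((t : ℝ) ^ p / Real.exp (omegaR M t))) = M p / M 0 := by
    apply le_antisymm
    · exact ciSup_le fun ⟨t, ht⟩ => hupper t ht
    · have := le_ciSup hbddO ⟨r p, hr_pos p⟩
      rwa [hval] at this
  rw [hsup, mul_comm, div_mul_cancel₀ _ (hM 0).ne']
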